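/- The one-dimensional death-process probabilities are stochastic: for θ > 0, rates λ_h = h(θ + h − 1)/2, and any m ≥ 0 and s ≥ 0, Σ_{n=0}^{m} p_{m,n}(s) = 1, where p_{m,m}(s) = e^{−λ_m s} and p_{m,n}(s) = C_{m,n}(s) for n < m as defined via the partial-fraction formula. -/

import Mathlib

/-- The death process rates `λ_h = h(θ + h - 1)/2`. -/
noncomputable def deathRate (θ : ℝ) (h : ℕ) : ℝ := h * (θ + h - 1) / 2

/-- The partial-fraction expression `C_{m,n}(s)`. -/
noncomputable def Cdeath (θ : ℝ) (m n : ℕ) (s : ℝ) : ℝ :=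
  (∏ h ∈ Finset.Icc (n + 1) m, deathRate θ h) * (-1 : ℝ) ^ (m - n) *
    ∑ k ∈ Finset.Icc n m, Real.exp (-(deathRate θ k) * s) /
      ∏ h ∈ (Finset.Icc n m).erase k, (deathRate θ k - deathRate θ h)

/-- Transition probabilities of the one-dimensional pure-death process. -/
noncomputable def pDeath (θ : ℝ) (m n : ℕ) (s : ℝ) : ℝ :=
  if n = m then Real.exp (-(deathRate θ m) * s)
  else if n < m then Cdeath θ m n s
  else 0

/-!
Expanding each `C_{m,n}(s)` and exchanging the two sums turns `∑ₙ p_{m,n}(s)` into a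
combination of the exponentials `e^{-λ_k s}`. For fixed `k` the coefficients telescope in `n`:
their sum over `n ∈ [j, k]` is the single fraction with numerator
`(-1)^(m-j) ∏_{h ∈ [j,k)} λ_h ∏_{h ∈ (k,m]} λ_h`. At `j = 0` this contains the factor `λ_0 = 0`
when `k > 0`, while for `k = 0` the coefficient is `1`; hence the sum is `e^{-λ_0 s} = 1`.
-/

open Finset

section PartialFractions

variable {r : ℕ → ℝ}

/-- The coefficient of `f k` in `C_{m,n}`, with the rates `r` in place of `λ` and `f k` in place
of `e^{-λ_k s}`. -/
noncomputable def partialFractionCoeff (r : ℕ → ℝ) (m n k : ℕ) : ℝ :=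
  (-1) ^ (m - n) * (∏ h ∈ Icc (n + 1) m, r h) / ∏ h ∈ (Icc n m).erase k, (r k - r h)

lemma prod_sub_ne_zero (hr : Function.Injective r) {k : ℕ} {s : Finset ℕ} (hk : k ∉ s) :
    ∏ h ∈ s, (r k - r h) ≠ 0 :=
  prod_ne_zero_iff.mpr fun _ hh => sub_ne_zero.mpr fun e => hk (hr e ▸ hh)

lemma sum_Icc_partialFractionCoeff (hr : Function.Injective r) {m j k : ℕ} (hjk : j ≤ k)
    (hkm : k ≤ m) :
    ∑ n ∈ Icc j k, partialFractionCoeff r m n k =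
      (-1) ^ (m - j) * ((∏ h ∈ Ico j k, r h) * ∏ h ∈ Icc (k + 1) m, r h) /
        ∏ h ∈ (Icc j m).erase k, (r k - r h) := by
  induction hjk using Nat.decreasingInduction with
  | self => simp [partialFractionCoeff]
  | of_succ j hjk ih =>
    rw [← insert_Icc_add_one_left_eq_Icc (by omega), sum_insert (by simp), ih]
    have hden : ∏ h ∈ (Icc j m).erase k, (r k - r h) =
        (r k - r j) * ∏ h ∈ (Icc (j + 1) m).erase k, (r k - r h) := by
      rw [← insert_Icc_add_one_left_eq_Icc (by omega), erase_insert_of_ne (by omega),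
        prod_insert (by simp)]
    have hnum : ∏ h ∈ Icc (j + 1) m, r h =
        (∏ h ∈ Ico (j + 1) k, r h) * (r k * ∏ h ∈ Icc (k + 1) m, r h) := by
      rw [← Ico_add_one_right_eq_Icc, ← Ico_add_one_right_eq_Icc,
        ← prod_Ico_consecutive _ (by omega : j + 1 ≤ k) (by omega : k ≤ m + 1),
        prod_eq_prod_Ico_succ_bot (by omega : k < m + 1)]
    have hsign : (-1 : ℝ) ^ (m - j) = -(-1) ^ (m - (j + 1)) := by
      rw [show m - j = m - (j + 1) + 1 by omega, pow_succ, mul_neg_one]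
    have hrj : r k - r j ≠ 0 := sub_ne_zero.mpr fun e => (by omega : k ≠ j) (hr e)
    have hD := prod_sub_ne_zero hr (notMem_erase k (Icc (j + 1) m))
    rw [partialFractionCoeff, hden, hnum, prod_eq_prod_Ico_succ_bot hjk, hsign]
    field_simp
    ring

lemma sum_Icc_zero_partialFractionCoeff (hr : Function.Injective r) (hr0 : r 0 = 0) {m k : ℕ}
    (hkm : k ≤ m) :
    ∑ n ∈ Icc 0 k, partialFractionCoeff r m n k = if k = 0 then 1 else 0 := by
  rcases Nat.eq_zero_or_pos k with rfl | hk
  · have hrm : ∏ h ∈ Icc 1 m, r h ≠ 0 :=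
      prod_ne_zero_iff.mpr fun h hh => hr0 ▸ hr.ne (by simp at hh; omega)
    have hden : ∏ h ∈ (Icc 0 m).erase 0, (r 0 - r h) = (-1) ^ m * ∏ h ∈ Icc 1 m, r h := by
      rw [← insert_Icc_add_one_left_eq_Icc (Nat.zero_le m), erase_insert (by simp),
        prod_congr rfl fun h _ => (by rw [hr0, zero_sub, neg_eq_neg_one_mul] :
          r 0 - r h = -1 * r h), prod_mul_distrib, prod_const, Nat.card_Icc, zero_add,
        Nat.add_sub_cancel]
    simp only [Icc_self, sum_singleton, partialFractionCoeff, hden, Nat.sub_zero, if_true]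
    field_simp
  · rw [sum_Icc_partialFractionCoeff hr (Nat.zero_le k) hkm,
      prod_eq_zero (by simpa using hk) hr0, if_neg hk.ne']
    simp

theorem sum_partialFraction_eq_apply_zero (hr : Function.Injective r) (hr0 : r 0 = 0) (m : ℕ)
    (f : ℕ → ℝ) :
    ∑ n ∈ range (m + 1), (∏ h ∈ Icc (n + 1) m, r h) * (-1) ^ (m - n) *
      ∑ k ∈ Icc n m, f k / ∏ h ∈ (Icc n m).erase k, (r k - r h) = f 0 := by
  calc _ = ∑ n ∈ range (m + 1), ∑ k ∈ Icc n m, partialFractionCoeff r m n k * f k := by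
        refine sum_congr rfl fun n _ => ?_
        rw [mul_sum]
        exact sum_congr rfl fun k _ => by rw [partialFractionCoeff]; ring
    _ = ∑ k ∈ range (m + 1), (∑ n ∈ Icc 0 k, partialFractionCoeff r m n k) * f k := by
        simp_rw [sum_mul]
        exact sum_comm' fun n k => by simp only [mem_range, mem_Icc]; omega
    _ = f 0 := by
        rw [sum_eq_single_of_mem 0 (by simp) fun k hk hk0 => by
          rw [sum_Icc_zero_partialFractionCoeff hr hr0 (by simpa [Nat.lt_succ_iff] using hk),
            if_neg hk0, zero_mul]]
        rw [sum_Icc_zero_partialFractionCoeff hr hr0 (Nat.zero_le m), if_pos rfl, one_mul]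

end PartialFractions

lemma deathRate_strictMono {θ : ℝ} (hθ : 0 < θ) : StrictMono (deathRate θ) := by
  refine strictMono_nat_of_lt_succ fun n => ?_
  simp only [deathRate]
  push_cast
  nlinarith [n.cast_nonneg (α := ℝ)]

lemma deathRate_zero (θ : ℝ) : deathRate θ 0 = 0 := by simp [deathRate]

lemma pDeath_eq_Cdeath (θ : ℝ) {m n : ℕ} (hn : n ≤ m) (s : ℝ) :
    pDeath θ m n s = Cdeath θ m n s := by
  rcases hn.eq_or_lt with rfl | hlt
  · simp [pDeath, Cdeath]
  · simp [pDeath, hlt.ne, hlt]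

theorem pDeath_stochastic_general (θ : ℝ) (hθ : 0 < θ) (m : ℕ) (s : ℝ) :
    ∑ n ∈ Finset.range (m + 1), pDeath θ m n s = 1 := by
  rw [sum_congr rfl fun n hn => pDeath_eq_Cdeath θ (Nat.lt_succ_iff.mp (mem_range.mp hn)) s]
  have hsum := sum_partialFraction_eq_apply_zero (deathRate_strictMono hθ).injective
    (deathRate_zero θ) m fun k => Real.exp (-deathRate θ k * s)
  rwa [deathRate_zero, neg_zero, zero_mul, Real.exp_zero] at hsum

theorem pDeath_stochastic (θ : ℝ) (hθ : 0 < θ) (m : ℕ) (s : ℝ) (hs : 0 ≤ s) :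
    ∑ n ∈ Finset.range (m + 1), pDeath θ m n s = 1 :=
  pDeath_stochastic_general θ hθ m s
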